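/- Let N have rank 3, let Σ and Σ̃ be finite complete nonsingular fans in N such that Σ̃ refines Σ, and let σ ∈ Σ(3) with G(σ) = {x_1, x_2, x_3}. Let σ̃ be the unique cone in Σ̃ ∖ {0} whose relative interior contains x_1+x_2+x_3. Then: (1) dim σ̃ = 3 if and only if σ = σ̃ ∈ Σ̃; (2) dim σ̃ = 2 if and only if, up to reindexing x_1, x_2, x_3, G(σ̃) = {x_1+x_2, x_3}; and (3) dim σ̃ = 1 if and only if G(σ̃) = {x_1+x_2+x_3}. -/

import Mathlib

noncomputable section

open Finset

/-- The real vector space `N_ℝ` for the lattice `N = ℤ^d`. -/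
abbrev NR (d : ℕ) := Fin d → ℝ

/-- The canonical map from the lattice `N = ℤ^d` to `N_ℝ`. -/
def toNR {d : ℕ} (x : Fin d → ℤ) : NR d := fun i => (x i : ℝ)

/-- The convex cone generated by a set: all finite nonnegative real combinations. -/
def coneOf {d : ℕ} (S : Set (NR d)) : Set (NR d) :=
  { y | ∃ (n : ℕ) (c : Fin n → ℝ) (v : Fin n → NR d),
      (∀ i, 0 ≤ c i) ∧ (∀ i, v i ∈ S) ∧ y = ∑ i, c i • v i }

/-- `τ` is a face of the cone `σ`, cut out by a linear functional nonnegative on `σ`. -/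
def IsFaceOf {d : ℕ} (τ σ : Set (NR d)) : Prop :=
  ∃ u : NR d →ₗ[ℝ] ℝ, (∀ x ∈ σ, 0 ≤ u x) ∧ τ = {x ∈ σ | u x = 0}

/-- A rational polyhedral cone: generated by finitely many lattice points. -/
def IsRationalPolyhedralCone {d : ℕ} (σ : Set (NR d)) : Prop :=
  ∃ S : Finset (Fin d → ℤ), σ = coneOf (toNR '' (↑S : Set (Fin d → ℤ)))

/-- A pointed (strongly convex) cone. -/
def IsPointedCone {d : ℕ} (σ : Set (NR d)) : Prop :=
  ∀ x ∈ σ, -x ∈ σ → x = 0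

/-- A primitive lattice vector. -/
def IsPrimitive {d : ℕ} (x : Fin d → ℤ) : Prop :=
  x ≠ 0 ∧ ∀ (k : ℤ) (y : Fin d → ℤ), x = k • y → k = 1 ∨ k = -1

/-- The dimension of a cone. -/
def coneDim {d : ℕ} (σ : Set (NR d)) : ℕ :=
  Module.finrank ℝ ↥(Submodule.span ℝ σ)

/-- A (finite) fan in `N = ℤ^d`: a finite collection of rational pointed polyhedral
cones, closed under taking faces, such that the intersection of any two cones is a
face of each. -/
structure Fan (d : ℕ) where
  cones : Set (Set (NR d))
  finite : cones.Finite
  rational : ∀ σ ∈ cones, IsRationalPolyhedralCone σ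
  pointed : ∀ σ ∈ cones, IsPointedCone σ
  face_mem : ∀ σ ∈ cones, ∀ τ : Set (NR d), IsFaceOf τ σ → τ ∈ cones
  inter_face : ∀ σ ∈ cones, ∀ τ ∈ cones, IsFaceOf (σ ∩ τ) σ

namespace Fan

variable {d : ℕ}

/-- A complete fan. -/
def IsComplete (F : Fan d) : Prop := ⋃₀ F.cones = Set.univ

/-- A simplicial fan: every cone is generated by linearly independent vectors. -/
def IsSimplicial (F : Fan d) : Prop :=
  ∀ σ ∈ F.cones, ∃ S : Finset (Fin d → ℤ),
    LinearIndependent ℝ (fun v : ↥(toNR '' (↑S : Set (Fin d → ℤ))) => (v : NR d)) ∧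
    σ = coneOf (toNR '' (↑S : Set (Fin d → ℤ)))

/-- A nonsingular fan: every cone is generated by part of a `ℤ`-basis of `N`. -/
def IsNonsingular (F : Fan d) : Prop :=
  ∀ σ ∈ F.cones, ∃ (b : Module.Basis (Fin d) ℤ (Fin d → ℤ)) (t : Set (Fin d)),
    σ = coneOf (toNR '' (⇑b '' t))

/-- `G(Σ)`: the set of primitive generators of the rays of a fan. -/
def genSet (F : Fan d) : Set (Fin d → ℤ) :=
  { x | IsPrimitive x ∧ coneOf {toNR x} ∈ F.cones }

/-- `G(σ) = σ ∩ G(Σ)`. -/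
def coneGens (F : Fan d) (σ : Set (NR d)) : Set (Fin d → ℤ) :=
  { x ∈ F.genSet | toNR x ∈ σ }

/-- A primitive collection of a fan. -/
def IsPrimitiveCollection (F : Fan d) (P : Finset (Fin d → ℤ)) : Prop :=
  P.Nonempty ∧ (↑P : Set (Fin d → ℤ)) ⊆ F.genSet ∧
    coneOf (toNR '' (↑P : Set (Fin d → ℤ))) ∉ F.cones ∧
    ∀ x ∈ P, coneOf (toNR '' ((↑P : Set (Fin d → ℤ)) \ {x})) ∈ F.cones

/-- `IsPrimRel F P Y a`: `P` is a primitive collection of `F` whose primitive relation is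
`∑_{x ∈ P} x = ∑_{y ∈ Y} (a y) • y`, where `Y = G(σ(P))` and `σ(P)` is the unique cone
whose relative interior contains `∑_{x ∈ P} x`, and the coefficients `a y` are positive. -/
def IsPrimRel (F : Fan d) (P Y : Finset (Fin d → ℤ)) (a : (Fin d → ℤ) → ℤ) : Prop :=
  F.IsPrimitiveCollection P ∧
  ∃ σ ∈ F.cones, (↑Y : Set (Fin d → ℤ)) = F.coneGens σ ∧
    toNR (∑ x ∈ P, x) ∈ intrinsicInterior ℝ σ ∧
    (∀ y ∈ Y, 0 < a y) ∧ (∑ x ∈ P, x) = ∑ y ∈ Y, a y • y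

/-- A Fano fan: a finite complete nonsingular fan with `deg P > 0` for every
primitive collection `P` (so its toric variety is a nonsingular toric Fano `d`-fold). -/
def IsFanoFan (F : Fan d) : Prop :=
  F.IsComplete ∧ F.IsNonsingular ∧
    ∀ P Y a, F.IsPrimRel P Y a → ∑ y ∈ Y, a y < (P.card : ℤ)

/-- The collection of cones of the star subdivision of `F` along `(σ, x)`. -/
def starSub (F : Fan d) (σ : Set (NR d)) (x : Fin d → ℤ) : Set (Set (NR d)) :=
  { τ ∈ F.cones | ¬ IsFaceOf σ τ } ∪
  { ρ | ∃ τ ∈ F.cones, IsFaceOf σ τ ∧ ∃ xi ∈ F.coneGens σ,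
      IsFaceOf ρ (coneOf (toNR ''
        (insert x ((F.coneGens τ \ F.coneGens σ) ∪ (F.coneGens σ \ {xi}))))) }

/-- `F'` is the star subdivision of `F` along `(σ, x)`. -/
def IsStarSubdivisionOf (F' F : Fan d) (σ : Set (NR d)) (x : Fin d → ℤ) : Prop :=
  F'.cones = F.starSub σ x

/-- `F'` is an equivariant blow-up of `F`: the star subdivision along a cone `σ` (with at
least two generators) and the sum of the elements of `G(σ)`. -/
def IsBlowupOf (F' F : Fan d) : Prop :=
  ∃ σ ∈ F.cones, ∃ S : Finset (Fin d → ℤ),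
    (↑S : Set (Fin d → ℤ)) = F.coneGens σ ∧ 2 ≤ S.card ∧
    F'.IsStarSubdivisionOf F σ (∑ y ∈ S, y)

/-- One step of F-equivalence: an equivariant blow-up or blow-down between Fano fans. -/
def FStep (F G : Fan d) : Prop :=
  F.IsFanoFan ∧ G.IsFanoFan ∧ (G.IsBlowupOf F ∨ F.IsBlowupOf G)

/-- F-equivalence of Fano fans. -/
def FEquiv : Fan d → Fan d → Prop := Relation.ReflTransGen FStep

/-- A splitting fan: any two distinct primitive collections are disjoint. -/
def IsSplittingFan (F : Fan d) : Prop :=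
  F.IsComplete ∧ F.IsNonsingular ∧
    ∀ P Q, F.IsPrimitiveCollection P → F.IsPrimitiveCollection Q → P ≠ Q →
      ∀ x ∈ P, x ∉ Q

/-- Data of a wall relation: `τ` is a wall (a `(d-1)`-dimensional cone) with
`G(τ) = Z`, `z_d = zd`, `z_{d+1} = zd1` the generators of the two maximal cones
containing `τ`, and `∑_{z ∈ Z} (b z) • z + zd + zd1 = 0`.  The anticanonical degree of
the corresponding invariant curve is `∑_{z ∈ Z} b z + 2`. -/
def IsWallRel (F : Fan d) (τ : Set (NR d)) (Z : Finset (Fin d → ℤ))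
    (zd zd1 : Fin d → ℤ) (b : (Fin d → ℤ) → ℤ) : Prop :=
  τ ∈ F.cones ∧ coneDim τ = d - 1 ∧ (↑Z : Set (Fin d → ℤ)) = F.coneGens τ ∧
    zd ∈ F.genSet ∧ zd1 ∈ F.genSet ∧ zd ≠ zd1 ∧ zd ∉ Z ∧ zd1 ∉ Z ∧
    coneOf (toNR '' (insert zd (↑Z : Set (Fin d → ℤ)))) ∈ F.cones ∧
    coneOf (toNR '' (insert zd1 (↑Z : Set (Fin d → ℤ)))) ∈ F.cones ∧
    (∑ z ∈ Z, b z • z) + zd + zd1 = 0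

end Fan

/-- The fan of a product of projective spaces `P^{a 0} × ⋯ × P^{a (r-1)}`. -/
def IsProdProjFan {d r : ℕ} (F : Fan d) (a : Fin r → ℕ) : Prop :=
  ∃ e : (j : Fin r) → Fin (a j + 1) → (Fin d → ℤ),
    (∀ j, ∑ i, e j i = 0) ∧
    (∃ b : Module.Basis ((j : Fin r) × Fin (a j)) ℤ (Fin d → ℤ),
       ∀ (j : Fin r) (i : Fin (a j)), e j i.castSucc = b ⟨j, i⟩) ∧
    F.cones = { σ | ∃ s : (j : Fin r) → Finset (Fin (a j + 1)),
        (∀ j, s j ≠ Finset.univ) ∧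
        σ = coneOf (toNR '' (⋃ j, (e j) '' (↑(s j) : Set (Fin (a j + 1))))) }

/-- The fan of the projective space `P^d`. -/
def IsProjFan {d : ℕ} (F : Fan d) : Prop := IsProdProjFan F (fun _ : Fin 1 => d)

/-- The lattice points of `N_ℝ`. -/
def latticePts (d : ℕ) : Set (NR d) := Set.range (toNR (d := d))

/-- `F` is, up to a unimodular identification, the product of the fans `F₁` and `F₂`. -/
def IsProductOf {d d₁ d₂ : ℕ} (F : Fan d) (F₁ : Fan d₁) (F₂ : Fan d₂) : Prop :=
  ∃ φ : NR d ≃ₗ[ℝ] NR d₁ × NR d₂,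
    (⇑φ '' latticePts d = (latticePts d₁) ×ˢ (latticePts d₂)) ∧
    F.cones = { σ | ∃ σ₁ ∈ F₁.cones, ∃ σ₂ ∈ F₂.cones, ⇑φ '' σ = σ₁ ×ˢ σ₂ }

/-- `δ` is a nonempty proper face of the polytope `Δ`. -/
def IsProperPolytopeFace {d : ℕ} (δ Δ : Set (NR d)) : Prop :=
  δ.Nonempty ∧ δ ≠ Δ ∧ ∃ (u : NR d →ₗ[ℝ] ℝ) (c : ℝ),
    (∀ x ∈ Δ, u x ≤ c) ∧ δ = {x ∈ Δ | u x = c}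

/-- The collection of cones over the proper faces of the polytope `Conv(V)`
(together with the zero cone). -/
def polytopeFaceFan {d : ℕ} (V : Set (NR d)) : Set (Set (NR d)) :=
  insert ({0} : Set (NR d))
    { σ | ∃ δ : Set (NR d), IsProperPolytopeFace δ (convexHull ℝ V) ∧ σ = coneOf δ }

/-- The four-dimensional del Pezzo fan `V⁴` (up to unimodular equivalence). -/
def IsDelPezzoFan4 (F : Fan 4) : Prop :=
  ∃ b : Module.Basis (Fin 4) ℤ (Fin 4 → ℤ),
    F.cones = polytopeFaceFan (toNR ''
      ((Set.range ⇑b) ∪ (Set.range fun i => -b i) ∪ {(∑ i, b i), -(∑ i, b i)}))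

/-- The four-dimensional pseudo del Pezzo fan `Ṽ⁴` (up to unimodular equivalence). -/
def IsPseudoDelPezzoFan4 (F : Fan 4) : Prop :=
  ∃ b : Module.Basis (Fin 4) ℤ (Fin 4 → ℤ),
    F.cones = polytopeFaceFan (toNR ''
      ((Set.range ⇑b) ∪ (Set.range fun i => -b i) ∪ {∑ i, b i}))

/-- An equivariant blow-up of a 3-dimensional fan at an invariant point: star subdivision
along a 3-dimensional cone and the sum of its three generators. -/
def PointBlowup3 (F' F : Fan 3) : Prop :=
  ∃ σ ∈ F.cones, ∃ S : Finset (Fin 3 → ℤ),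
    (↑S : Set (Fin 3 → ℤ)) = F.coneGens σ ∧ S.card = 3 ∧
    F'.IsStarSubdivisionOf F σ (∑ y ∈ S, y)

/-- An equivariant blow-up of a 3-dimensional fan along an invariant curve: star
subdivision along a 2-dimensional cone and the sum of its two generators. -/
def CurveBlowup3 (F' F : Fan 3) : Prop :=
  ∃ σ ∈ F.cones, ∃ S : Finset (Fin 3 → ℤ),
    (↑S : Set (Fin 3 → ℤ)) = F.coneGens σ ∧ S.card = 2 ∧
    F'.IsStarSubdivisionOf F σ (∑ y ∈ S, y)

/-!
Since `x₁ + x₂ + x₃` lies in the interior of `σ`, the cone of `Σ` containing `σ̃` meets the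
interior of `σ`, hence is `σ`; so `σ̃ ⊆ σ`. The generators of the nonsingular cone `σ̃` therefore
have nonnegative integer coordinates in the basis `x₁, x₂, x₃`, and `x₁ + x₂ + x₃` is a combination
of them with positive integer coefficients. Comparing coordinates, every `xⱼ` occurs in exactly one
generator, with coefficient one: `G(σ̃)` consists of the block sums of a partition of
`{x₁, x₂, x₃}`, and `dim σ̃` is the number of blocks.
-/

open Filter Topology

section Lattice

variable {d : ℕ}

@[simp]
lemma toNR_zsmul (k : ℤ) (x : Fin d → ℤ) : toNR (k • x) = (k : ℝ) • toNR x := by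
  ext i; simp [toNR]

@[simp]
lemma toNR_zero : toNR (0 : Fin d → ℤ) = 0 := by
  ext i; simp [toNR]

lemma toNR_sum {ι : Type*} (s : Finset ι) (f : ι → Fin d → ℤ) :
    toNR (∑ i ∈ s, f i) = ∑ i ∈ s, toNR (f i) := by
  ext j; simp [toNR]

lemma toNR_injective : Function.Injective (toNR (d := d)) :=
  fun _ _ h => funext fun i => Int.cast_injective (congrFun h i)

end Lattice

section Cone

variable {d : ℕ}

theorem coneOf_eq_hull (S : Set (NR d)) : coneOf S = PointedCone.hull ℝ S := by
  ext y
  simp only [coneOf, SetLike.mem_coe, Submodule.mem_span_set']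
  constructor
  · rintro ⟨n, c, v, hc, hv, rfl⟩
    exact ⟨n, fun i => ⟨c i, hc i⟩, fun i => ⟨v i, hv i⟩, rfl⟩
  · rintro ⟨n, c, v, rfl⟩
    exact ⟨n, fun i => c i, fun i => v i, fun i => (c i).2, fun i => (v i).2, rfl⟩

lemma subset_coneOf (S : Set (NR d)) : S ⊆ coneOf S := by
  rw [coneOf_eq_hull]; exact Submodule.subset_span

lemma mem_coneOf_singleton {w z : NR d} : z ∈ coneOf {w} ↔ ∃ r : ℝ, 0 ≤ r ∧ r • w = z := by
  rw [coneOf_eq_hull, SetLike.mem_coe, Submodule.mem_span_singleton]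
  constructor
  · rintro ⟨r, rfl⟩; exact ⟨r, r.2, rfl⟩
  · rintro ⟨r, hr, rfl⟩; exact ⟨⟨r, hr⟩, rfl⟩

lemma coneOf_singleton_subset {S : Set (NR d)} {w : NR d} (hw : w ∈ coneOf S) :
    coneOf {w} ⊆ coneOf S := by
  simp only [coneOf_eq_hull] at hw ⊢
  exact SetLike.coe_subset_coe.2 (Submodule.span_le.2 (Set.singleton_subset_iff.2 hw))

lemma span_coneOf (S : Set (NR d)) : Submodule.span ℝ (coneOf S) = Submodule.span ℝ S := by
  rw [coneOf_eq_hull]; exact Submodule.span_span_of_tower _ _ _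

lemma exists_pos_add_smul_mem_of_mem_intrinsicInterior {V : Type*} [NormedAddCommGroup V]
    [NormedSpace ℝ V] {s : Set V} {z v : V} (hz : z ∈ intrinsicInterior ℝ s)
    (hv : v ∈ (affineSpan ℝ s).direction) : ∃ ε : ℝ, 0 < ε ∧ z + ε • v ∈ s := by
  obtain ⟨p, hp, rfl⟩ := mem_intrinsicInterior.1 hz
  let f : ℝ → affineSpan ℝ s := fun ε =>
    ⟨ε • v +ᵥ (p : V), AffineSubspace.vadd_mem_of_mem_direction (Submodule.smul_mem _ ε hv) p.2⟩
  have hf : Continuous f := by fun_prop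
  have hf0 : f 0 = p := by ext; simp [f]
  have hnear : ∀ᶠ ε in 𝓝 0, f ε ∈ interior (((↑) : affineSpan ℝ s → V) ⁻¹' s) :=
    hf.continuousAt.preimage_mem_nhds (hf0 ▸ isOpen_interior.mem_nhds hp)
  obtain ⟨ε, hε, hmem⟩ := ((eventually_mem_nhdsWithin (s := Set.Ioi (0 : ℝ))).and
    (hnear.filter_mono nhdsWithin_le_nhds)).exists
  exact ⟨ε, hε, by simpa [f, add_comm] using interior_subset hmem⟩

end Cone

section SimplicialCone

variable {d : ℕ} {ι : Type*} [Fintype ι] (B : Module.Basis ι ℝ (NR d)) (t : Set ι)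

theorem mem_coneOf_basis_image {z : NR d} :
    z ∈ coneOf (B '' t) ↔ (∀ i, 0 ≤ B.repr z i) ∧ ∀ i ∉ t, B.repr z i = 0 := by
  classical
  rw [coneOf_eq_hull, SetLike.mem_coe]
  constructor
  · intro hz
    induction hz using Submodule.span_induction with
    | mem x hx =>
      obtain ⟨j, hj, rfl⟩ := hx
      refine ⟨fun i => ?_, fun i hi => ?_⟩
      · simp only [B.repr_self, Finsupp.single_apply]; split_ifs <;> norm_num
      · simp [B.repr_self, show j ≠ i from fun h => hi (h ▸ hj)]
    | zero => simp
    | add x y _ _ hx hy =>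
      exact ⟨fun i => by simpa using add_nonneg (hx.1 i) (hy.1 i),
        fun i hi => by simp [hx.2 i hi, hy.2 i hi]⟩
    | smul a x _ hx =>
      rw [← Nonneg.coe_smul]
      simp only [map_smul, Finsupp.smul_apply, smul_eq_mul]
      exact ⟨fun i => by simpa using mul_nonneg a.2 (hx.1 i), fun i hi => by simp [hx.2 i hi]⟩
  · rintro ⟨hnn, hzero⟩
    rw [← B.sum_repr z]
    refine Submodule.sum_mem _ fun i _ => ?_
    by_cases hi : i ∈ t
    · rw [← Nonneg.mk_smul _ (hnn i)]
      exact Submodule.smul_mem _ _ (Submodule.subset_span ⟨i, hi, rfl⟩)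
    · simp [hzero i hi]

theorem coneDim_coneOf_basis_image : coneDim (coneOf (B '' t)) = t.ncard := by
  classical
  have := Fintype.ofFinite (B '' t)
  rw [coneDim, span_coneOf, finrank_span_set_eq_card (B.linearIndependent.linearIndepOn t).id_image,
    ← Set.ncard_eq_toFinset_card', Set.ncard_image_of_injective t B.injective]

theorem repr_pos_of_mem_intrinsicInterior {z : NR d}
    (hz : z ∈ intrinsicInterior ℝ (coneOf (B '' t))) {i : ι} (hi : i ∈ t) :
    0 < B.repr z i := by
  have hBi : B i ∈ coneOf (B '' t) := subset_coneOf _ ⟨i, hi, rfl⟩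
  have h0 : (0 : NR d) ∈ coneOf (B '' t) := by rw [coneOf_eq_hull]; exact zero_mem _
  obtain ⟨ε, hε, hmem⟩ := exists_pos_add_smul_mem_of_mem_intrinsicInterior hz
    (AffineSubspace.vsub_mem_direction (subset_affineSpan ℝ _ h0) (subset_affineSpan ℝ _ hBi))
  have hnn := ((mem_coneOf_basis_image B t).1 hmem).1 i
  have hcoord : B.repr (z + ε • (0 -ᵥ B i)) i = B.repr z i - ε := by simp [sub_eq_add_neg]
  linarith

end SimplicialCone

section Faces

variable {d : ℕ} {ι : Type*} (B : Module.Basis ι ℝ (NR d))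

theorem IsFaceOf.eq_of_forall_basis_mem {τ σ : Set (NR d)} (h : IsFaceOf τ σ)
    (hB : ∀ i, B i ∈ τ) : τ = σ := by
  obtain ⟨u, -, rfl⟩ := h
  have hu : u = 0 := B.ext fun i => (hB i).2
  simp [hu]

variable [Fintype ι]

theorem basis_mem_of_isFaceOf {t : Set ι} {τ : Set (NR d)} (hτ : IsFaceOf τ (coneOf (B '' t)))
    {w : NR d} (hw : w ∈ τ) {j : ι} (hj : 0 < B.repr w j) : B j ∈ τ := by
  obtain ⟨u, hu, rfl⟩ := hτ
  obtain ⟨hwσ, huw⟩ := hw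
  obtain ⟨hnn, hzero⟩ := (mem_coneOf_basis_image B t).1 hwσ
  have hjt : j ∈ t := by
    by_contra h
    exact hj.ne' (hzero j h)
  have hterm : ∀ i, 0 ≤ B.repr w i * u (B i) := by
    intro i
    by_cases hi : i ∈ t
    · exact mul_nonneg (hnn i) (hu _ (subset_coneOf _ ⟨i, hi, rfl⟩))
    · simp [hzero i hi]
  have hsum : ∑ i, B.repr w i * u (B i) = 0 := by
    rw [← huw]
    conv_rhs => rw [← B.sum_repr w]
    simp only [map_sum, map_smul, smul_eq_mul]
  have hj0 := (Finset.sum_eq_zero_iff_of_nonneg fun i _ => hterm i).1 hsum j (mem_univ j)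
  exact ⟨subset_coneOf _ ⟨j, hjt, rfl⟩, (mul_eq_zero.1 hj0).resolve_left hj.ne'⟩

theorem isFaceOf_coneOf_singleton_basis {t : Set ι} {i : ι} (hi : i ∈ t) :
    IsFaceOf (coneOf {B i}) (coneOf (B '' t)) := by
  classical
  refine ⟨∑ j ∈ univ.erase i, B.coord j, fun x hx => ?_, ?_⟩
  · rw [LinearMap.sum_apply]
    exact sum_nonneg fun j _ => ((mem_coneOf_basis_image B t).1 hx).1 j
  · ext x
    constructor
    · intro hx
      obtain ⟨r, -, rfl⟩ := mem_coneOf_singleton.1 hx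
      refine ⟨coneOf_singleton_subset (subset_coneOf (B '' t) ⟨i, hi, rfl⟩) hx, ?_⟩
      rw [LinearMap.sum_apply]
      exact sum_eq_zero fun j hj => by simp [(mem_erase.1 hj).1.symm]
    · rintro ⟨hx, hsum⟩
      obtain ⟨hnn, -⟩ := (mem_coneOf_basis_image B t).1 hx
      simp only [LinearMap.sum_apply, Module.Basis.coord_apply] at hsum
      have hoff := (sum_eq_zero_iff_of_nonneg fun j _ => hnn j).1 hsum
      refine mem_coneOf_singleton.2 ⟨B.repr x i, hnn i, ?_⟩
      calc B.repr x i • B i = ∑ j, B.repr x j • B j := by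
            rw [Fintype.sum_eq_single i]
            intro j hj
            rw [hoff j (mem_erase.2 ⟨hj, mem_univ j⟩), zero_smul]
        _ = x := B.sum_repr x

end Faces

section RealBasis

variable {d : ℕ} (b : Module.Basis (Fin d) ℤ (Fin d → ℤ))

lemma top_le_span_range_toNR_basis : ⊤ ≤ Submodule.span ℝ (Set.range (toNR ∘ b)) := by
  have hlattice : ∀ v, toNR v ∈ Submodule.span ℝ (Set.range (toNR ∘ b)) := by
    intro v
    rw [← b.sum_repr v, toNR_sum]
    exact Submodule.sum_mem _ fun i _ => by
      rw [toNR_zsmul]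
      exact Submodule.smul_mem _ _ (Submodule.subset_span ⟨i, rfl⟩)
  rw [← (Pi.basisFun ℝ (Fin d)).span_eq, Submodule.span_le]
  rintro _ ⟨j, rfl⟩
  have hj : Pi.basisFun ℝ (Fin d) j = toNR (Pi.single j 1) := by
    ext i
    simp [toNR, Pi.single_apply]
  rw [SetLike.mem_coe, hj]
  exact hlattice _

def realBasis : Module.Basis (Fin d) ℝ (NR d) :=
  basisOfTopLeSpanOfCardEqFinrank (toNR ∘ b) (top_le_span_range_toNR_basis b) (by simp)

lemma realBasis_apply (i : Fin d) : realBasis b i = toNR (b i) := by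
  simp [realBasis]

@[simp]
lemma realBasis_repr_toNR (v : Fin d → ℤ) (i : Fin d) :
    (realBasis b).repr (toNR v) i = b.repr v i := by
  have hv : toNR v = ∑ j, (b.repr v j : ℝ) • realBasis b j := by
    conv_lhs => rw [← b.sum_repr v]
    rw [toNR_sum]
    simp only [toNR_zsmul, realBasis_apply]
  rw [hv, Module.Basis.repr_sum_self]

lemma image_toNR_image_basis (t : Set (Fin d)) : toNR '' (b '' t) = realBasis b '' t := by
  rw [Set.image_image]; simp [realBasis_apply]

theorem coneDim_coneOf_toNR_image_basis_image (t : Set (Fin d)) :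
    coneDim (coneOf (toNR '' (b '' t))) = t.ncard := by
  rw [image_toNR_image_basis, coneDim_coneOf_basis_image]

theorem toNR_mem_coneOf_iff {t : Set (Fin d)} {v : Fin d → ℤ} :
    toNR v ∈ coneOf (toNR '' (b '' t)) ↔ (∀ i, 0 ≤ b.repr v i) ∧ ∀ i ∉ t, b.repr v i = 0 := by
  rw [image_toNR_image_basis, mem_coneOf_basis_image]
  simp

theorem repr_pos_of_toNR_mem_intrinsicInterior {t : Set (Fin d)} {v : Fin d → ℤ}
    (hv : toNR v ∈ intrinsicInterior ℝ (coneOf (toNR '' (b '' t)))) {i : Fin d} (hi : i ∈ t) :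
    0 < b.repr v i := by
  rw [image_toNR_image_basis] at hv
  exact_mod_cast realBasis_repr_toNR b v i ▸ repr_pos_of_mem_intrinsicInterior _ t hv hi

lemma isPrimitive_basis (i : Fin d) : IsPrimitive (b i) := by
  refine ⟨b.ne_zero i, fun k y hky => Int.eq_one_or_neg_one_of_mul_eq_one (v := b.repr y i) ?_⟩
  have h : b.repr (b i) i = b.repr (k • y) i := by rw [← hky]
  rw [map_smul] at h
  simpa using h.symm

theorem eq_basis_of_smul_toNR_eq {y : Fin d → ℤ} (hy : IsPrimitive y) {r : ℝ} (hr : 0 ≤ r)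
    {j : Fin d} (h : r • toNR y = toNR (b j)) : y = b j := by
  have hcoord : ∀ i, r * b.repr y i = if j = i then 1 else 0 := fun i => by
    simpa [Finsupp.single_apply] using congrArg (fun v => (realBasis b).repr v i) h
  have hr0 : r ≠ 0 := left_ne_zero_of_mul_eq_one (by simpa using hcoord j)
  have hy_eq : y = b.repr y j • b j := by
    conv_lhs => rw [← b.sum_repr y]
    refine sum_eq_single j (fun i _ hi => ?_) (by simp)
    have := hcoord i
    rw [if_neg (Ne.symm hi), mul_eq_zero] at this
    have hi0 : b.repr y i = 0 := by exact_mod_cast this.resolve_left hr0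
    simp [hi0]
  rcases hy.2 _ _ hy_eq with hk | hk
  · rw [hy_eq, hk, one_smul]
  · have := hcoord j
    rw [hk, if_pos rfl, Int.cast_neg, Int.cast_one] at this
    linarith

end RealBasis

namespace Fan

variable {d : ℕ}

theorem coneGens_coneOf_basis_image (F : Fan d) (b : Module.Basis (Fin d) ℤ (Fin d → ℤ))
    (t : Set (Fin d)) (hσ : coneOf (toNR '' (b '' t)) ∈ F.cones) :
    F.coneGens (coneOf (toNR '' (b '' t))) = b '' t := by
  set B := realBasis b
  rw [image_toNR_image_basis] at hσ ⊢
  ext y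
  constructor
  · rintro ⟨⟨hprim, hray⟩, hyσ⟩
    obtain ⟨hnn, hzero⟩ := (mem_coneOf_basis_image B t).1 hyσ
    obtain ⟨j, hj⟩ : ∃ j, 0 < B.repr (toNR y) j := by
      by_contra! h
      refine hprim.1 (toNR_injective (B.repr.injective ?_))
      ext j
      simpa using le_antisymm (h j) (hnn j)
    have hface := F.inter_face _ hσ _ hray
    rw [Set.inter_eq_self_of_subset_right (coneOf_singleton_subset hyσ)] at hface
    obtain ⟨r, hr, hrj⟩ :=
      mem_coneOf_singleton.1 (basis_mem_of_isFaceOf B hface (subset_coneOf _ rfl) hj)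
    have hjt : j ∈ t := by
      by_contra h
      exact hj.ne' (hzero j h)
    exact ⟨j, hjt, (eq_basis_of_smul_toNR_eq b hprim hr (by rwa [realBasis_apply] at hrj)).symm⟩
  · rintro ⟨j, hj, rfl⟩
    refine ⟨⟨isPrimitive_basis b j, ?_⟩, subset_coneOf _ ⟨j, hj, realBasis_apply b j⟩⟩
    rw [← realBasis_apply]
    exact F.face_mem _ hσ _ (isFaceOf_coneOf_singleton_basis B hj)

theorem subset_of_forall_repr_pos (F : Fan d) {ι : Type*} [Fintype ι]
    {B : Module.Basis ι ℝ (NR d)} (hσ : coneOf (B '' Set.univ) ∈ F.cones)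
    {σ' : Set (NR d)} (hσ' : σ' ∈ F.cones) {z : NR d} (hz : z ∈ σ')
    (hpos : ∀ i, 0 < B.repr z i) : σ' ⊆ coneOf (B '' Set.univ) := by
  have hzσ : z ∈ coneOf (B '' Set.univ) :=
    (mem_coneOf_basis_image B _).2 ⟨fun i => (hpos i).le, fun i hi => absurd (Set.mem_univ i) hi⟩
  have hBσ' : ∀ i, B i ∈ σ' := fun i =>
    (basis_mem_of_isFaceOf B (F.inter_face _ hσ _ hσ') ⟨hzσ, hz⟩ (hpos i)).2
  exact Set.inter_eq_left.1 <| (F.inter_face _ hσ' _ hσ).eq_of_forall_basis_mem B fun i =>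
    ⟨hBσ' i, subset_coneOf _ ⟨i, Set.mem_univ i, rfl⟩⟩

end Fan

section Blocks

lemma exists_eq_one_of_sum_eq_one {ι : Type*} [Fintype ι] {f : ι → ℤ} (hf : ∀ i, 0 ≤ f i)
    (h : ∑ i, f i = 1) : ∃ i, f i = 1 ∧ ∀ i' ≠ i, f i' = 0 := by
  classical
  obtain ⟨i, -, hi⟩ := exists_ne_zero_of_sum_ne_zero (h ▸ one_ne_zero)
  have hsplit := add_sum_erase univ f (mem_univ i)
  have hrest : 0 ≤ ∑ i' ∈ univ.erase i, f i' := sum_nonneg fun i' _ => hf i'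
  have hfi : f i = 1 := by have := (hf i).lt_of_ne' hi; omega
  refine ⟨i, hfi, fun i' hi' => ?_⟩
  exact (sum_eq_zero_iff_of_nonneg fun i' _ => hf i').1 (by omega) i'
    (mem_erase.2 ⟨hi', mem_univ i'⟩)

variable {M ι κ : Type*} [AddCommGroup M] [Fintype ι] [Fintype κ] [DecidableEq κ]

theorem exists_image_eq_range_sum_fiber (X : Module.Basis ι ℤ M) (c : Module.Basis κ ℤ M)
    (s : Set κ) (hc : ∀ i ∈ s, ∀ j, 0 ≤ X.repr (c i) j)
    (hpos : ∀ i ∈ s, 0 < c.repr (∑ j, X j) i) (hzero : ∀ i ∉ s, c.repr (∑ j, X j) i = 0) :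
    ∃ g : ι → κ, c '' s = Set.range fun j => ∑ j' ∈ univ.filter (g · = g j), X j' := by
  set m := c.repr (∑ j, X j)
  have hsum : ∀ j, ∑ i, m i * X.repr (c i) j = 1 := by
    intro j
    have h : X.repr (∑ i, m i • c i) j = X.repr (∑ j, X j) j := by rw [c.sum_repr]
    simpa [map_sum, Finsupp.single_apply] using h
  have hblock : ∀ j, ∃ i ∈ s, X.repr (c i) j = 1 ∧ ∀ i' ∈ s, i' ≠ i → X.repr (c i') j = 0 := by
    intro j
    have hnn : ∀ i, 0 ≤ m i * X.repr (c i) j := fun i => by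
      by_cases hi : i ∈ s
      · exact mul_nonneg (hpos i hi).le (hc i hi j)
      · rw [hzero i hi, zero_mul]
    obtain ⟨i, hi1, hi0⟩ := exists_eq_one_of_sum_eq_one hnn (hsum j)
    have his : i ∈ s := by
      by_contra h
      rw [hzero i h, zero_mul] at hi1
      exact zero_ne_one hi1
    exact ⟨i, his, Int.eq_one_of_mul_eq_one_left (hc i his j) hi1, fun i' hi' hne =>
      (mul_eq_zero.1 (hi0 i' hne)).resolve_left (hpos i' hi').ne'⟩
  choose g hgs hg1 hg0 using hblock
  have hcg : ∀ i ∈ s, c i = ∑ j ∈ univ.filter (g · = i), X j := by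
    intro i hi
    rw [sum_filter]
    conv_lhs => rw [← X.sum_repr (c i)]
    refine sum_congr rfl fun j _ => ?_
    split_ifs with h
    · rw [← h, hg1, one_smul]
    · rw [hg0 j i hi (Ne.symm h), zero_smul]
  have hrange : Set.range g = s := by
    refine Set.Subset.antisymm (Set.range_subset_iff.2 hgs) fun i hi => ?_
    by_contra h
    refine c.ne_zero i ((hcg i hi).trans (sum_eq_zero fun j hj => ?_))
    exact absurd ⟨j, (mem_filter.1 hj).2⟩ h
  refine ⟨g, ?_⟩
  rw [← hrange, ← Set.range_comp]
  exact congrArg Set.range (funext fun j => hcg _ (hgs j))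

end Blocks

/-- `R` is the partition of `Fin 3` into the fibres of `g`; there are five such partitions. -/
lemma card_image_fibers_fin_three (g : Fin 3 → Fin 3) :
    let R := univ.image fun j => univ.filter (g · = g j)
    (R.card = 3 ↔ R = {{0}, {1}, {2}}) ∧
    (R.card = 2 ↔ R = {{0, 1}, {2}} ∨ R = {{0, 2}, {1}} ∨ R = {{1, 2}, {0}}) ∧
    (R.card = 1 ↔ R = {{0, 1, 2}}) := by
  revert g
  decide

theorem ncard_range_sum_fiber_fin_three_iff {M : Type*} [AddCommGroup M]
    (X : Module.Basis (Fin 3) ℤ M) (g : Fin 3 → Fin 3) {G : Set M}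
    (hG : G = Set.range fun j => ∑ j' ∈ univ.filter (g · = g j), X j') :
    (G.ncard = 3 ↔ G = {X 0, X 1, X 2}) ∧
    (G.ncard = 2 ↔ G = {X 0 + X 1, X 2} ∨ G = {X 0 + X 2, X 1} ∨ G = {X 1 + X 2, X 0}) ∧
    (G.ncard = 1 ↔ G = {X 0 + X 1 + X 2}) := by
  set Φ : Finset (Fin 3) → M := fun P => ∑ j ∈ P, X j
  have hΦ : Function.Injective Φ := by
    intro P Q h
    ext j
    have hj := congrArg (fun v => X.repr v j) h
    simp only [Φ, map_sum, X.repr_self, Finsupp.finsetSum_apply, Finsupp.single_apply,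
      sum_ite_eq'] at hj
    by_cases hP : j ∈ P <;> by_cases hQ : j ∈ Q <;> simp_all
  set R := univ.image fun j => univ.filter (g · = g j)
  have hGR : G = Φ '' R := by
    rw [hG, coe_image, coe_univ, Set.image_univ, ← Set.range_comp]
    rfl
  have himage : ∀ A : Finset (Finset (Fin 3)), G = Φ '' A ↔ R = A := fun A => by
    rw [hGR, (Set.image_injective.2 hΦ).eq_iff, coe_inj]
  have hcard : G.ncard = R.card := by
    rw [hGR, Set.ncard_image_of_injective _ hΦ, Set.ncard_coe_finset]
  have h3 : ({X 0, X 1, X 2} : Set M) = Φ '' ↑({{0}, {1}, {2}} : Finset (Finset (Fin 3))) := by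
    simp [Φ, Set.image_insert_eq]
  have h2a : ({X 0 + X 1, X 2} : Set M) = Φ '' ↑({{0, 1}, {2}} : Finset (Finset (Fin 3))) := by
    simp [Φ, Set.image_insert_eq]
  have h2b : ({X 0 + X 2, X 1} : Set M) = Φ '' ↑({{0, 2}, {1}} : Finset (Finset (Fin 3))) := by
    simp [Φ, Set.image_insert_eq]
  have h2c : ({X 1 + X 2, X 0} : Set M) = Φ '' ↑({{1, 2}, {0}} : Finset (Finset (Fin 3))) := by
    simp [Φ, Set.image_insert_eq]
  have h1 : ({X 0 + X 1 + X 2} : Set M) = Φ '' ↑({{0, 1, 2}} : Finset (Finset (Fin 3))) := by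
    simp [Φ, add_assoc]
  rw [hcard, h3, h2a, h2b, h2c, h1, himage, himage, himage, himage, himage]
  exact card_image_fibers_fin_three g

lemma range_fin_three {α : Type*} (f : Fin 3 → α) : Set.range f = {f 0, f 1, f 2} := by
  ext y
  simp [Fin.exists_fin_succ, eq_comm]

theorem Module.Basis.exists_coe_eq_of_range_eq {ι ι' R M : Type*} [Semiring R] [AddCommMonoid M]
    [Module R M] (b : Module.Basis ι R M) {v : ι' → M} (hv : Function.Injective v)
    (h : Set.range v = Set.range b) : ∃ X : Module.Basis ι' R M, ⇑X = v :=
  ⟨b.reindexRange.reindex ((Equiv.ofInjective v hv).trans (Equiv.setCongr h)).symm,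
    funext fun i => by simp [Module.Basis.reindexRange_apply]⟩

theorem Fan.exists_basis_of_coneGens_eq (F : Fan 3) (hFn : F.IsNonsingular) {σ : Set (NR 3)}
    (hσ : σ ∈ F.cones) (hσ3 : coneDim σ = 3) {x₁ x₂ x₃ : Fin 3 → ℤ}
    (h12 : x₁ ≠ x₂) (h13 : x₁ ≠ x₃) (h23 : x₂ ≠ x₃) (hgens : F.coneGens σ = {x₁, x₂, x₃}) :
    ∃ X : Module.Basis (Fin 3) ℤ (Fin 3 → ℤ), X 0 = x₁ ∧ X 1 = x₂ ∧ X 2 = x₃ ∧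
      σ = coneOf (toNR '' (X '' Set.univ)) := by
  obtain ⟨b, t, rfl⟩ := hFn σ hσ
  rw [F.coneGens_coneOf_basis_image b t hσ] at hgens
  rw [coneDim_coneOf_toNR_image_basis_image] at hσ3
  obtain rfl : t = Set.univ := (Set.eq_univ_iff_ncard t).2 (by simpa using hσ3)
  obtain ⟨X, hX⟩ := b.exists_coe_eq_of_range_eq (v := ![x₁, x₂, x₃])
    (by intro i j; fin_cases i <;> fin_cases j <;> simp [*, Ne.symm h12, Ne.symm h13, Ne.symm h23])
    (by rw [← Set.image_univ (f := ⇑b), hgens, range_fin_three]; rfl)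
  refine ⟨X, by simp [hX], by simp [hX], by simp [hX], ?_⟩
  rw [hgens, Set.image_univ, hX, range_fin_three]
  rfl

theorem refining_cone_of_maximal_cone_general (F Ft : Fan 3)
    (hFn : F.IsNonsingular)
    (hFtn : Ft.IsNonsingular)
    (href : ∀ τ ∈ Ft.cones, ∃ σ ∈ F.cones, τ ⊆ σ)
    (σ : Set (NR 3)) (hσ : σ ∈ F.cones) (hσ3 : coneDim σ = 3)
    (x₁ x₂ x₃ : Fin 3 → ℤ) (h12 : x₁ ≠ x₂) (h13 : x₁ ≠ x₃) (h23 : x₂ ≠ x₃)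
    (hgens : F.coneGens σ = {x₁, x₂, x₃})
    (σt : Set (NR 3)) (hσt : σt ∈ Ft.cones)
    (hrel : toNR (x₁ + x₂ + x₃) ∈ intrinsicInterior ℝ σt) :
    (coneDim σt = 3 ↔ σt = σ) ∧
    (coneDim σt = 2 ↔ (Ft.coneGens σt = {x₁ + x₂, x₃} ∨ Ft.coneGens σt = {x₁ + x₃, x₂} ∨
        Ft.coneGens σt = {x₂ + x₃, x₁})) ∧
    (coneDim σt = 1 ↔ Ft.coneGens σt = {x₁ + x₂ + x₃}) := by
  obtain ⟨X, rfl, rfl, rfl, hσX⟩ := F.exists_basis_of_coneGens_eq hFn hσ hσ3 h12 h13 h23 hgens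
  rw [← Fin.sum_univ_three] at hrel
  have hσtσ : σt ⊆ σ := by
    obtain ⟨σ', hσ', hσtσ'⟩ := href σt hσt
    rw [hσX, image_toNR_image_basis] at hσ ⊢
    refine hσtσ'.trans (F.subset_of_forall_repr_pos hσ hσ' (hσtσ' (intrinsicInterior_subset hrel))
      fun i => ?_)
    simp [Finsupp.single_apply]
  obtain ⟨c, s, rfl⟩ := hFtn σt hσt
  have hc : ∀ i ∈ s, ∀ j, 0 ≤ X.repr (c i) j := fun i hi =>
    ((toNR_mem_coneOf_iff X).1 (hσX ▸ hσtσ (subset_coneOf _ ⟨c i, ⟨i, hi, rfl⟩, rfl⟩))).1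
  obtain ⟨g, hg⟩ := exists_image_eq_range_sum_fiber X c s hc
    (fun i hi => repr_pos_of_toNR_mem_intrinsicInterior c hrel hi)
    ((toNR_mem_coneOf_iff c).1 (intrinsicInterior_subset hrel)).2
  have hdim : coneDim (coneOf (toNR '' (c '' s))) = (c '' s).ncard := by
    rw [coneDim_coneOf_toNR_image_basis_image, Set.ncard_image_of_injective _ c.injective]
  obtain ⟨h3, h2, h1⟩ := ncard_range_sum_fiber_fin_three_iff X g hg
  rw [Ft.coneGens_coneOf_basis_image c s hσt, hdim]
  refine ⟨⟨fun h => ?_, fun h => by rw [← hdim, h, hσ3]⟩, h2, h1⟩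
  rw [hσX, h3.1 h, Set.image_univ, range_fin_three]

/-- Classification of the cone `σ̃` of a refining fan whose relative
interior contains `x₁ + x₂ + x₃`, for a maximal cone `σ` with `G(σ) = {x₁, x₂, x₃}`. -/
theorem refining_cone_of_maximal_cone (F Ft : Fan 3)
    (hFc : F.IsComplete) (hFn : F.IsNonsingular)
    (hFtc : Ft.IsComplete) (hFtn : Ft.IsNonsingular)
    (href : ∀ τ ∈ Ft.cones, ∃ σ ∈ F.cones, τ ⊆ σ)
    (σ : Set (NR 3)) (hσ : σ ∈ F.cones) (hσ3 : coneDim σ = 3)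
    (x₁ x₂ x₃ : Fin 3 → ℤ) (h12 : x₁ ≠ x₂) (h13 : x₁ ≠ x₃) (h23 : x₂ ≠ x₃)
    (hgens : F.coneGens σ = {x₁, x₂, x₃})
    (σt : Set (NR 3)) (hσt : σt ∈ Ft.cones)
    (hrel : toNR (x₁ + x₂ + x₃) ∈ intrinsicInterior ℝ σt) :
    (coneDim σt = 3 ↔ σt = σ) ∧
    (coneDim σt = 2 ↔ (Ft.coneGens σt = {x₁ + x₂, x₃} ∨ Ft.coneGens σt = {x₁ + x₃, x₂} ∨
        Ft.coneGens σt = {x₂ + x₃, x₁})) ∧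
    (coneDim σt = 1 ↔ Ft.coneGens σt = {x₁ + x₂ + x₃}) :=
  refining_cone_of_maximal_cone_general F Ft hFn hFtn href σ hσ hσ3 x₁ x₂ x₃ h12 h13 h23 hgens σt
    hσt hrel
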